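/- arXiv:2102.02190 — 6 statements merged into one kernel-verified Lean document; each statement's English description precedes it below -/
import Mathlib

section
/- Let G be a finite transitive permutation group on a finite set Ω, let α ∈ Ω, let b ≥ 1 be an integer, and let R be a set of representatives for the G-conjugacy classes of elements of prime order in G_α. Then the proportion Q(G,b) of b-tuples in Ω^b that are not bases for G satisfies Q(G,b) ≤ Σ_{x∈R} |x^G ∩ G_α|^b · |C_G(x)|^{b-1} / |G|^{b-1}. -/
/-!
If `g ≠ 1` fixes a tuple, so does a power of `g` of prime order, which is conjugate to some `x ∈ R`.
Hence the non-bases are covered by the sets `fix(y)^b` with `y ∈ x^G`, `x ∈ R`, and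
`Q(G,b) ≤ ∑_{x ∈ R} |x^G| fpr(x)^b` with `fpr(x) = |fix(x)| / |Ω|`. Double counting fixed points of
`x^G` and transitivity give `fpr(x) = |x^G ∩ G_α| / |x^G|`, and the class equation gives
`|x^G| = |G| / |C_G(x)|`.
-/

open MulAction Pointwise

lemma Set.ncard_biUnion_le_ncard_mul {ι α : Type*} {s : Set ι} (hs : s.Finite)
    {f : ι → Set α} {n : ℕ} (hf : ∀ i ∈ s, (f i).ncard ≤ n) :
    (⋃ i ∈ s, f i).ncard ≤ s.ncard * n := by
  have hunion : ⋃ i ∈ s, f i = ⋃ i ∈ hs.toFinset, f i := by simp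
  rw [hunion, Set.ncard_eq_toFinset_card s hs, ← smul_eq_mul]
  exact (Finset.set_ncard_biUnion_le _ _).trans
    (Finset.sum_le_card_nsmul _ _ _ fun i hi => hf i (hs.mem_toFinset.mp hi))

lemma exists_prime_orderOf_pow {G : Type*} [Group G] [Finite G] {g : G} (hg : g ≠ 1) :
    ∃ n : ℕ, (orderOf (g ^ n)).Prime := by
  obtain ⟨p, hp, hdvd⟩ := Nat.exists_prime_and_dvd (orderOf_eq_one_iff.not.mpr hg)
  exact ⟨orderOf g / p, by rwa [orderOf_pow_orderOf_div (orderOf_pos g).ne' hdvd]⟩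

namespace MulAction

variable {G Ω : Type*} [Group G] [MulAction G Ω]

lemma ncard_fixedBy_of_isConj {x y : G} (h : IsConj x y) :
    (fixedBy Ω x).ncard = (fixedBy Ω y).ncard := by
  obtain ⟨g, rfl⟩ := isConj_iff.mp h
  rw [← smul_fixedBy, Set.ncard_smul_set]

lemma ncard_isConj_fixing_smul_eq (x g : G) (a : Ω) :
    {y | IsConj x y ∧ y • g • a = g • a}.ncard = {y | IsConj x y ∧ y • a = a}.ncard := by
  rw [← Nat.card_coe_set_eq, ← Nat.card_coe_set_eq]
  refine Nat.card_congr ((MulAut.conj g).toEquiv.subtypeEquiv fun y => ?_).symm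
  have hconj : IsConj y (MulAut.conj g y) := isConj_iff.mpr ⟨g, rfl⟩
  simp only [Set.mem_ofPred_eq, MulEquiv.toEquiv_eq_coe, EquivLike.coe_coe, MulAut.conj_apply,
    mul_smul, inv_smul_smul, smul_left_cancel_iff]
  exact and_congr_left' ⟨fun h => h.trans hconj, fun h => h.trans hconj.symm⟩

-- Double count the pairs `(y, ω)` with `y ∈ x^G` fixing `ω`: conjugating by `g` with `g • a = ω`
-- shows that every `ω` is fixed by as many elements of `x^G` as `a` is.
lemma ncard_isConj_mul_ncard_fixedBy [Finite G] [Finite Ω] [IsPretransitive G Ω] (x : G) (a : Ω) :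
    {y | IsConj x y}.ncard * (fixedBy Ω x).ncard
      = Nat.card Ω * {y | IsConj x y ∧ y • a = a}.ncard := by
  classical
  have := Fintype.ofFinite G
  have := Fintype.ofFinite Ω
  have key := Finset.card_mul_eq_card_mul (fun (y : G) (ω : Ω) => y • ω = ω)
    (s := {y | IsConj x y}.toFinset) (t := Finset.univ) (m := (fixedBy Ω x).ncard)
    (n := {y | IsConj x y ∧ y • a = a}.ncard) ?_ ?_
  · simpa [Set.ncard_eq_toFinset_card'] using key
  · intro y hy
    rw [ncard_fixedBy_of_isConj (by simpa using hy), Set.ncard_eq_toFinset_card']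
    congr 1
    ext ω
    simp [Finset.mem_bipartiteAbove]
  · intro ω _
    obtain ⟨g, rfl⟩ := exists_smul_eq G a ω
    rw [← ncard_isConj_fixing_smul_eq x g a, Set.ncard_eq_toFinset_card']
    congr 1
    ext y
    simp [Finset.mem_bipartiteBelow]

lemma ncard_isConj_mul_card_centralizer (x : G) :
    {y | IsConj x y}.ncard * Nat.card (Subgroup.centralizer {x}) = Nat.card G := by
  have horbit : {y | IsConj x y} = orbit (ConjAct G) x := by
    ext y
    rw [Set.mem_ofPred_eq, ConjAct.mem_orbit_conjAct, isConj_comm]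
  rw [horbit, ← index_stabilizer, Subgroup.nat_card_centralizer_nat_card_stabilizer, mul_comm,
    Subgroup.card_mul_index]
  exact Nat.card_congr ConjAct.ofConjAct.toEquiv

lemma ncard_pi_fixedBy [Finite Ω] (b : ℕ) (y : G) :
    (Set.univ.pi fun _ : Fin b => fixedBy Ω y).ncard = (fixedBy Ω y).ncard ^ b := by
  rw [← Nat.card_coe_set_eq, Nat.card_congr (Equiv.Set.univPi _), Nat.card_pi,
    Finset.prod_const, Finset.card_univ, Fintype.card_fin, Nat.card_coe_set_eq]

lemma exists_mem_isConj_of_prime_orderOf [IsPretransitive G Ω] {R : Set G} {a : Ω}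
    (hrep : ∀ y : G, (orderOf y).Prime → y • a = a → ∃ x ∈ R, IsConj x y)
    {y : G} (hy : (orderOf y).Prime) {ω : Ω} (hω : y • ω = ω) :
    ∃ x ∈ R, IsConj x y := by
  obtain ⟨g, rfl⟩ := exists_smul_eq G a ω
  have hconj : IsConj y (MulAut.conj g⁻¹ y) := isConj_iff.mpr ⟨g⁻¹, rfl⟩
  obtain ⟨x, hxR, hx⟩ := hrep (MulAut.conj g⁻¹ y) (by rwa [MulEquiv.orderOf_eq])
    (by simp [mul_smul, hω])
  exact ⟨x, hxR, hx.trans hconj.symm⟩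

lemma setOf_exists_fixing_subset [Finite G] [IsPretransitive G Ω] {R : Finset G} {a : Ω}
    (hrep : ∀ y : G, (orderOf y).Prime → y • a = a → ∃ x ∈ (R : Set G), IsConj x y)
    {b : ℕ} (hb : 0 < b) :
    {t : Fin b → Ω | ∃ g : G, g ≠ 1 ∧ ∀ i, g • t i = t i}
      ⊆ ⋃ x ∈ R, ⋃ y ∈ {y | IsConj x y}, Set.univ.pi fun _ => fixedBy Ω y := by
  rintro t ⟨g, hg, hgt⟩
  obtain ⟨n, hn⟩ := exists_prime_orderOf_pow hg
  have hfix : ∀ i, t i ∈ fixedBy Ω (g ^ n) := fun i => by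
    simpa using fixedBy_subset_fixedBy_zpow Ω g n (hgt i)
  obtain ⟨x, hxR, hx⟩ := exists_mem_isConj_of_prime_orderOf hrep hn (hfix ⟨0, hb⟩)
  simp only [Set.mem_iUnion, Set.mem_pi, Set.mem_univ, forall_const]
  exact ⟨x, hxR, g ^ n, hx, hfix⟩

lemma ncard_biUnion_pi_fixedBy_le [Finite G] [Finite Ω] (R : Finset G) (b : ℕ) :
    (⋃ x ∈ R, ⋃ y ∈ {y | IsConj x y}, Set.univ.pi fun _ : Fin b => fixedBy Ω y).ncard
      ≤ ∑ x ∈ R, {y | IsConj x y}.ncard * (fixedBy Ω x).ncard ^ b :=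
  (Finset.set_ncard_biUnion_le _ _).trans <| Finset.sum_le_sum fun x _ =>
    Set.ncard_biUnion_le_ncard_mul (Set.toFinite _) fun y hy => by
      rw [ncard_pi_fixedBy, ncard_fixedBy_of_isConj hy]

end MulAction

lemma mul_pow_div_pow_eq_of_mul_eq {K : Type*} [Field K] {c f n a z m : K} {b : ℕ}
    (hb : 0 < b) (hn : n ≠ 0) (hm : m ≠ 0) (hf : c * f = n * a) (hz : c * z = m) :
    c * f ^ b / n ^ b = a ^ b * z ^ (b - 1) / m ^ (b - 1) := by
  obtain ⟨k, rfl⟩ := Nat.exists_eq_succ_of_ne_zero hb.ne'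
  rw [div_eq_div_iff (by positivity) (by positivity), Nat.succ_sub_one]
  calc c * f ^ (k + 1) * m ^ k = (c * f) ^ (k + 1) * z ^ k := by rw [← hz]; ring
    _ = a ^ (k + 1) * z ^ k * n ^ (k + 1) := by rw [hf]; ring

theorem stmt4_general {G Ω : Type*} [Group G] [Finite G] [Fintype Ω] [MulAction G Ω]
    [MulAction.IsPretransitive G Ω] (α : Ω) (b : ℕ) (hb : 1 ≤ b)
    (R : Finset G)
    (hrep : ∀ y : G, (orderOf y).Prime → y • α = α → ∃! x, x ∈ R ∧ IsConj x y) :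
    (Nat.card {t : Fin b → Ω | ∃ g : G, g ≠ 1 ∧ ∀ i, g • t i = t i} : ℚ)
        / (Fintype.card Ω : ℚ) ^ b
      ≤ ∑ x ∈ R,
          (Nat.card {y : G | IsConj x y ∧ y • α = α} : ℚ) ^ b *
            (Nat.card (Subgroup.centralizer ({x} : Set G)) : ℚ) ^ (b - 1) /
            (Nat.card G : ℚ) ^ (b - 1) := by
  have hcount : Nat.card {t : Fin b → Ω | ∃ g : G, g ≠ 1 ∧ ∀ i, g • t i = t i}
      ≤ ∑ x ∈ R, {y | IsConj x y}.ncard * (fixedBy Ω x).ncard ^ b := by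
    rw [Nat.card_coe_set_eq]
    exact (Set.ncard_le_ncard (setOf_exists_fixing_subset
      (fun y hy hyα => (hrep y hy hyα).exists) hb)).trans (ncard_biUnion_pi_fixedBy_le R b)
  have : Nonempty Ω := ⟨α⟩
  have hΩ : (Nat.card Ω : ℚ) ≠ 0 := Nat.cast_ne_zero.mpr Nat.card_pos.ne'
  have hG : (Nat.card G : ℚ) ≠ 0 := Nat.cast_ne_zero.mpr Nat.card_pos.ne'
  rw [← Nat.card_eq_fintype_card]
  calc _ ≤ ((∑ x ∈ R, {y | IsConj x y}.ncard * (fixedBy Ω x).ncard ^ b : ℕ) : ℚ)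
        / (Nat.card Ω : ℚ) ^ b := by gcongr
    _ = ∑ x ∈ R, ({y | IsConj x y}.ncard : ℚ) * (fixedBy Ω x).ncard ^ b / (Nat.card Ω) ^ b := by
      push_cast
      exact Finset.sum_div _ _ _
    _ = _ := Finset.sum_congr rfl fun x _ => by
      rw [Nat.card_coe_set_eq]
      refine mul_pow_div_pow_eq_of_mul_eq hb hΩ hG ?_ ?_
      · exact_mod_cast ncard_isConj_mul_ncard_fixedBy x α
      · exact_mod_cast ncard_isConj_mul_card_centralizer x

/-- Liebeck–Shalev bound: for a finite transitive permutation group `G` on `Ω`,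
a point `α`, an integer `b ≥ 1` and a set `R` of representatives of the
`G`-conjugacy classes of prime order elements of `G_α`, the proportion `Q(G,b)`
of `b`-tuples that are not bases for `G` satisfies
`Q(G,b) ≤ Σ_{x∈R} |x^G ∩ G_α|^b · |C_G(x)|^{b-1} / |G|^{b-1}`. -/
theorem stmt4 {G Ω : Type*} [Group G] [Finite G] [Fintype Ω] [MulAction G Ω]
    [FaithfulSMul G Ω] [MulAction.IsPretransitive G Ω] (α : Ω) (b : ℕ) (hb : 1 ≤ b)
    (R : Finset G)
    (hR : ∀ x ∈ R, (orderOf x).Prime ∧ x • α = α)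
    (hrep : ∀ y : G, (orderOf y).Prime → y • α = α → ∃! x, x ∈ R ∧ IsConj x y) :
    (Nat.card {t : Fin b → Ω | ∃ g : G, g ≠ 1 ∧ ∀ i, g • t i = t i} : ℚ)
        / (Fintype.card Ω : ℚ) ^ b
      ≤ ∑ x ∈ R,
          (Nat.card {y : G | IsConj x y ∧ y • α = α} : ℚ) ^ b *
            (Nat.card (Subgroup.centralizer ({x} : Set G)) : ℚ) ^ (b - 1) /
            (Nat.card G : ℚ) ^ (b - 1) :=
  stmt4_general α b hb R hrep
end

section
/- Let H be a finite permutation group on a set Δ with |Δ| ≥ 2 and let K ≤ S_r be nontrivial. Let G be a subgroup of the wreath product H ≀ K acting via the product action on Ω = Δ^r. Then b_Ω(G) ≤ ⌈ log d(K) / log |Δ| ⌉ + b_Δ(H), where d(K) is the distinguishing number of K on {1,…,r} and b denotes base size. -/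
/-!
Colour `{1,…,r}` with `d = d(K)` colours so that only the identity of `K` preserves the
colouring, and encode the colours injectively as words of length `m = ⌈log d / log |Δ|⌉`
over `Δ`; reading the `j`-th letters gives `m` points of `Δ^r`. Add the constant points
`(δ,…,δ)` for `δ` in a base of `H`. An element of `G` fixing all of these has trivial
components (by the constant points), hence its top part preserves the colouring, hence is
trivial.
-/

open Equiv

section Bases

variable {X ι α : Type*}

def IsBase (G : Subgroup (Perm X)) (S : Finset X) : Prop :=
  ∀ g ∈ G, (∀ x ∈ S, g x = x) → g = 1

def IsDistinguishing (K : Subgroup (Perm ι)) (c : ι → α) : Prop :=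
  ∀ π ∈ K, (∀ i, c (π i) = c i) → π = 1

theorem isBase_univ [Fintype X] (G : Subgroup (Perm X)) : IsBase G Finset.univ :=
  fun _ _ hfix => Equiv.ext fun x => hfix x (Finset.mem_univ x)

theorem IsDistinguishing.of_injective (K : Subgroup (Perm ι)) {c : ι → α}
    (hc : Function.Injective c) : IsDistinguishing K c :=
  fun _ _ hfix => Equiv.ext fun i => hc (hfix i)

end Bases

theorem le_pow_ceil_log_div_log (d : ℕ) {c : ℕ} (hc : 1 < c) :
    d ≤ c ^ ⌈Real.log d / Real.log c⌉₊ := by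
  rcases Nat.eq_zero_or_pos d with rfl | hd
  · exact Nat.zero_le _
  have hlogc : 0 < Real.log c := Real.log_pos (by exact_mod_cast hc)
  have hlog : Real.log d ≤ Real.log ((c : ℝ) ^ ⌈Real.log d / Real.log c⌉₊) := by
    rw [Real.log_pow, ← div_le_iff₀ hlogc]
    exact Nat.le_ceil _
  exact_mod_cast (Real.log_le_log_iff (by exact_mod_cast hd) (by positivity)).1 hlog

theorem nonempty_embedding_fin_ceil_log {Δ : Type*} [Fintype Δ] (d : ℕ)
    (hΔ : 1 < Fintype.card Δ) :
    Nonempty (Fin d ↪ (Fin ⌈Real.log d / Real.log (Fintype.card Δ)⌉₊ → Δ)) :=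
  Function.Embedding.nonempty_of_card_le <| by
    simpa only [Fintype.card_fin, Fintype.card_fun] using le_pow_ceil_log_div_log d hΔ

section ProductAction

variable {ι Δ α J : Type*} {H : Subgroup (Perm Δ)} {K : Subgroup (Perm ι)}

def productBase [DecidableEq (ι → Δ)] [Fintype J] (c : ι → α) (e : α → J → Δ)
    (T : Finset Δ) : Finset (ι → Δ) :=
  Finset.univ.image (fun j i => e (c i) j) ∪ T.image (Function.const ι)

theorem card_productBase_le [DecidableEq (ι → Δ)] [Fintype J] (c : ι → α)
    (e : α → J → Δ) (T : Finset Δ) :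
    (productBase c e T).card ≤ Fintype.card J + T.card :=
  (Finset.card_union_le _ _).trans <|
    add_le_add (Finset.card_image_le.trans_eq Finset.card_univ) Finset.card_image_le

theorem isBase_productBase [DecidableEq (ι → Δ)] [Fintype J]
    {G : Subgroup (Perm (ι → Δ))}
    (hG : ∀ g ∈ G, ∃ π ∈ K, ∃ h : ι → Perm Δ,
        (∀ i, h i ∈ H) ∧ ∀ (f : ι → Δ) (i : ι), g f (π i) = h i (f i))
    {c : ι → α} (hc : IsDistinguishing K c) {e : α → J → Δ} (he : Function.Injective e)
    {T : Finset Δ} (hT : IsBase H T) :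
    IsBase G (productBase c e T) := by
  intro g hg hfix
  obtain ⟨π, hπ, h, hH, hgh⟩ := hG g hg
  have hh_one : ∀ i, h i = 1 := fun i => hT (h i) (hH i) fun δ hδ => by
    have hconst : Function.const ι δ ∈ productBase c e T :=
      Finset.mem_union_right _ (Finset.mem_image_of_mem _ hδ)
    simpa [hfix _ hconst] using (hgh (Function.const ι δ) i).symm
  have hπ_one : π = 1 := hc π hπ fun i => he <| funext fun j => by
    have hword : (fun i => e (c i) j) ∈ productBase c e T :=
      Finset.mem_union_left _ (Finset.mem_image_of_mem _ (Finset.mem_univ j))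
    simpa [hfix _ hword, hh_one i] using hgh (fun i => e (c i) j) i
  refine Equiv.ext fun f => funext fun i => ?_
  simpa [hπ_one, hh_one i] using hgh f i

end ProductAction

theorem stmt5_general {Δ : Type*} [Fintype Δ] (hΔ : 2 ≤ Fintype.card Δ)
    (H : Subgroup (Equiv.Perm Δ)) {r : ℕ}
    (K : Subgroup (Equiv.Perm (Fin r)))
    (G : Subgroup (Equiv.Perm (Fin r → Δ)))
    (hG : ∀ g ∈ G, ∃ π ∈ K, ∃ h : Fin r → Equiv.Perm Δ,
        (∀ i, h i ∈ H) ∧ ∀ (f : Fin r → Δ) (i : Fin r), g f (π i) = h i (f i)) :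
    sInf {n | ∃ S : Finset (Fin r → Δ), S.card = n ∧
        ∀ g ∈ G, (∀ f ∈ S, g f = f) → g = 1}
      ≤ ⌈Real.log (sInf {d | ∃ c : Fin r → Fin d,
            ∀ π ∈ K, (∀ i, c (π i) = c i) → π = 1} : ℕ) /
          Real.log (Fintype.card Δ)⌉₊
        + sInf {n | ∃ S : Finset Δ, S.card = n ∧
            ∀ h ∈ H, (∀ δ ∈ S, h δ = δ) → h = 1} := by
  classical
  change sInf {n | ∃ S : Finset (Fin r → Δ), S.card = n ∧ IsBase G S}
    ≤ ⌈Real.log (sInf {d | ∃ c : Fin r → Fin d, IsDistinguishing K c} : ℕ) /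
        Real.log (Fintype.card Δ)⌉₊ + sInf {n | ∃ T : Finset Δ, T.card = n ∧ IsBase H T}
  set d := sInf {d | ∃ c : Fin r → Fin d, IsDistinguishing K c}
  set b := sInf {n | ∃ T : Finset Δ, T.card = n ∧ IsBase H T}
  obtain ⟨c, hc⟩ : ∃ c : Fin r → Fin d, IsDistinguishing K c :=
    Nat.sInf_mem (s := {d | ∃ c : Fin r → Fin d, IsDistinguishing K c})
      ⟨r, id, IsDistinguishing.of_injective K Function.injective_id⟩
  obtain ⟨T, hTcard, hT⟩ : ∃ T : Finset Δ, T.card = b ∧ IsBase H T :=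
    Nat.sInf_mem (s := {n | ∃ T : Finset Δ, T.card = n ∧ IsBase H T})
      ⟨_, Finset.univ, rfl, isBase_univ H⟩
  obtain ⟨e⟩ := nonempty_embedding_fin_ceil_log d hΔ
  calc sInf {n | ∃ S : Finset (Fin r → Δ), S.card = n ∧ IsBase G S}
      ≤ (productBase c e T).card := Nat.sInf_le ⟨_, rfl, isBase_productBase hG hc e.injective hT⟩
    _ ≤ Fintype.card (Fin _) + T.card := card_productBase_le c e T
    _ = _ := by rw [Fintype.card_fin, hTcard]

/-- Let `H ≤ Sym(Δ)` with `|Δ| ≥ 2`, let `K ≤ S_r` be nontrivial, and let `G` be a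
subgroup of the wreath product `H ≀ K` in its product action on `Ω = Δ^r` (i.e. every
element of `G` has the product-action form with components in `H` and top part in `K`).
Then `b_Ω(G) ≤ ⌈ log d(K) / log |Δ| ⌉ + b_Δ(H)`, where `d(K)` is the distinguishing
number of `K` on `{1,…,r}`. -/
theorem stmt5 {Δ : Type*} [Fintype Δ] (hΔ : 2 ≤ Fintype.card Δ)
    (H : Subgroup (Equiv.Perm Δ)) {r : ℕ}
    (K : Subgroup (Equiv.Perm (Fin r))) (hK : K ≠ ⊥)
    (G : Subgroup (Equiv.Perm (Fin r → Δ)))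
    (hG : ∀ g ∈ G, ∃ π ∈ K, ∃ h : Fin r → Equiv.Perm Δ,
        (∀ i, h i ∈ H) ∧ ∀ (f : Fin r → Δ) (i : Fin r), g f (π i) = h i (f i)) :
    sInf {n | ∃ S : Finset (Fin r → Δ), S.card = n ∧
        ∀ g ∈ G, (∀ f ∈ S, g f = f) → g = 1}
      ≤ ⌈Real.log (sInf {d | ∃ c : Fin r → Fin d,
            ∀ π ∈ K, (∀ i, c (π i) = c i) → π = 1} : ℕ) /
          Real.log (Fintype.card Δ)⌉₊
        + sInf {n | ∃ S : Finset Δ, S.card = n ∧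
            ∀ h ∈ H, (∀ δ ∈ S, h δ = δ) → h = 1} :=
  stmt5_general hΔ H K G hG
end

section
/- Under the twisted wreath product hypothesis, for every x ∈ P the number of elements of the base group B fixed by x satisfies |Fix_B(x)| ≤ |T|^{ω(x)}, where ω(x) is the number of orbits of ⟨x⟩ on {1,…,k}. -/
/-!
Choose `a i ∈ P` with `a i • i₀ = i`. Every `y ∈ P` lies in a double coset `⟨x⟩ a_j Q` where `j`
is the chosen representative of the `⟨x⟩`-orbit of `y • i₀`. A fixed point `f` of `x` is
constant on left `⟨x⟩`-cosets and satisfies `f (a_j q) = φ q (f a_j)`, so it is determined by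
its values at the `ω(x)` elements `a_j`.
-/

open MulAction

section

variable {P : Type*} [Group P]

def leftPeriods {T : Type*} (f : P → T) : Subgroup P where
  carrier := {g | ∀ y, f (g * y) = f y}
  one_mem' y := by rw [one_mul]
  mul_mem' {g h} hg hh y := by rw [mul_assoc, hg, hh]
  inv_mem' {g} hg y := by rw [← hg, mul_inv_cancel_left]

variable {X : Type*} [MulAction P X]

theorem exists_mem_mul_rep_mul_stabilizer (H : Subgroup P) {i₀ : X} {a : X → P}
    (ha : ∀ i, a i • i₀ = i) (y : P) :
    ∃ O : orbitRel.Quotient H X, ∃ h ∈ H, ∃ q : stabilizer P i₀, y = h * (a O.out * q) := by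
  set j := (⟦y • i₀⟧ : orbitRel.Quotient H X).out
  obtain ⟨g, hg⟩ : j ∈ orbit H (y • i₀) := Quotient.mk_out (s := orbitRel H X) (y • i₀)
  have hq : ((a j)⁻¹ * g * y) • i₀ = i₀ := by
    rw [mul_smul, mul_smul, inv_smul_eq_iff, ha]
    exact hg
  exact ⟨⟦y • i₀⟧, g⁻¹, inv_mem g.2, ⟨_, hq⟩, by simp [j, mul_assoc]⟩

theorem eq_of_forall_apply_rep_eq {T : Type*} {H : Subgroup P} {i₀ : X} {a : X → P}
    (ha : ∀ i, a i • i₀ = i) (φ : stabilizer P i₀ → T → T) {f g : P → T}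
    (hf : ∀ y (q : stabilizer P i₀), f (y * q) = φ q (f y))
    (hg : ∀ y (q : stabilizer P i₀), g (y * q) = φ q (g y))
    (hfH : H ≤ leftPeriods f) (hgH : H ≤ leftPeriods g)
    (hfg : ∀ O : orbitRel.Quotient H X, f (a O.out) = g (a O.out)) : f = g := by
  funext y
  obtain ⟨O, h, hh, q, rfl⟩ := exists_mem_mul_rep_mul_stabilizer H ha y
  rw [hfH hh, hgH hh, hf, hg, hfg]

end

theorem stmt10_general {P T : Type*} [Group P] [Group T] [Finite T] {k : ℕ}
    [MulAction P (Fin k)] [MulAction.IsPretransitive P (Fin k)] (i₀ : Fin k)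
    (φ : MulAction.stabilizer P i₀ →* MulAut T) (x : P) :
    Nat.card {f : P → T //
        (∀ (y : P) (q : MulAction.stabilizer P i₀), f (y * q) = φ q (f y)) ∧
        ∀ y : P, f (x * y) = f y}
      ≤ Nat.card T ^
          Nat.card (MulAction.orbitRel.Quotient (Subgroup.zpowers x) (Fin k)) := by
  choose a ha using exists_smul_eq P i₀
  have hinj : Function.Injective fun (f : {f : P → T //
        (∀ (y : P) (q : stabilizer P i₀), f (y * q) = φ q (f y)) ∧ ∀ y : P, f (x * y) = f y})
      (O : orbitRel.Quotient (Subgroup.zpowers x) (Fin k)) => f.1 (a O.out) :=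
    fun f g hfg => Subtype.ext <| eq_of_forall_apply_rep_eq ha (fun q => φ q) f.2.1 g.2.1
      (Subgroup.zpowers_le.mpr f.2.2) (Subgroup.zpowers_le.mpr g.2.2) (congrFun hfg)
  exact (Nat.card_le_card_of_injective _ hinj).trans_eq Nat.card_fun

/-- Under the twisted wreath hypothesis, the number of elements of the base group `B`
fixed by `x ∈ P` is at most `|T|^{ω(x)}`, where `ω(x)` is the number of orbits of
`⟨x⟩` on `{1,…,k}`. -/
theorem stmt10 {P T : Type*} [Group P] [Group T] [Finite P] [Finite T] {k : ℕ}
    [MulAction P (Fin k)] [MulAction.IsPretransitive P (Fin k)] (i₀ : Fin k)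
    (φ : MulAction.stabilizer P i₀ →* MulAut T) (x : P) :
    Nat.card {f : P → T //
        (∀ (y : P) (q : MulAction.stabilizer P i₀), f (y * q) = φ q (f y)) ∧
        ∀ y : P, f (x * y) = f y}
      ≤ Nat.card T ^
          Nat.card (MulAction.orbitRel.Quotient (Subgroup.zpowers x) (Fin k)) :=
  stmt10_general i₀ φ x
end

section
/- Under the twisted wreath hypothesis, log d(P) / log |T| < log |G| / log |B|, where d(P) is the distinguishing number of P on {1,…,k}, |G| = |T|^k |P| and |B| = |T|^k, assuming the bound d(P) ≤ 48·|P^{{1,…,k}}|^{1/k} (Duyan–Halasi–Maróti) and |T| > 48 (true for any nonabelian simple group, since the smallest has order 60). -/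
/-! Write `t = log |T|`, `p = log |P|` and `R` for the permutation group induced by `P`, a quotient
of `P`. The bound of Duyan–Halasi–Maróti gives `log d ≤ log 48 + (log |R|) / k < t + p / k`, using
`48 < |T|` and `|R| ≤ |P|`; dividing by `t` yields `1 + p / (k t) = log |G| / log |B|`. -/

open Real

lemma log_le_log_add_log_div_of_le_mul_rpow {x c R k : ℝ} (hx : 0 ≤ x) (hc : 1 ≤ c) (hR : 1 ≤ R)
    (hk : 0 ≤ k) (h : x ≤ c * R ^ (1 / k)) : log x ≤ log c + log R / k := by
  rcases hx.eq_or_lt with rfl | hx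
  · rw [log_zero]
    have := log_nonneg hc
    have := div_nonneg (log_nonneg hR) hk
    linarith
  · calc log x ≤ log (c * R ^ (1 / k)) := log_le_log hx h
      _ = log c + log R / k := by
        rw [log_mul (by positivity) (by positivity), log_rpow (by positivity), one_div_mul_eq_div]

lemma div_log_lt_log_pow_mul_div_log_pow {x a b : ℝ} {k : ℕ} (ha : 1 < a) (hb : 0 < b)
    (hk : k ≠ 0) (h : x < log a + log b / k) :
    x / log a < log (a ^ k * b) / log (a ^ k) := by
  have hloga : 0 < log a := log_pos ha
  calc x / log a < (log a + log b / k) / log a := div_lt_div_of_pos_right h hloga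
    _ = log (a ^ k * b) / log (a ^ k) := by
      rw [log_mul (by positivity) hb.ne', log_pow]
      field_simp

theorem stmt14_general {P T : Type*} [Group P] [Finite P] {k : ℕ}
    (hk : 2 ≤ k) [MulAction P (Fin k)]
    (hT48 : 48 < Nat.card T)
    (d : ℕ)
    (hDHM : (d : ℝ) ≤ 48 *
        (Nat.card (MulAction.toPermHom P (Fin k)).range : ℝ) ^ ((1 : ℝ) / k)) :
    Real.log d / Real.log (Nat.card T)
      < Real.log ((Nat.card T : ℝ) ^ k * (Nat.card P : ℝ)) /
          Real.log ((Nat.card T : ℝ) ^ k) := by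
  set R := Nat.card (MulAction.toPermHom P (Fin k)).range
  have hRP : R ≤ Nat.card P :=
    Nat.card_le_card_of_surjective _ (MulAction.toPermHom P (Fin k)).rangeRestrict_surjective
  have hR : (1 : ℝ) ≤ R := by exact_mod_cast Nat.card_pos
  have hT : (48 : ℝ) < Nat.card T := by exact_mod_cast hT48
  have hk0 : (0 : ℝ) < k := by positivity
  have hlogd : log d ≤ log 48 + log R / k :=
    log_le_log_add_log_div_of_le_mul_rpow d.cast_nonneg (by norm_num) hR hk0.le hDHM
  have hlogR : log R / k ≤ log (Nat.card P) / k :=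
    div_le_div_of_nonneg_right (log_le_log (by positivity) (by exact_mod_cast hRP)) hk0.le
  have hlog48 : log 48 < log (Nat.card T) := log_lt_log (by norm_num) hT
  exact div_log_lt_log_pow_mul_div_log_pow (by linarith) (by exact_mod_cast Nat.card_pos)
    (by omega) (by linarith)

/-- Under the twisted wreath hypothesis, assuming the Duyan–Halasi–Maróti bound
`d(P) ≤ 48·|P^{𝐤}|^{1/k}` and `|T| > 48`, we have
`log d(P) / log |T| < log |G| / log |B|`, where `|G| = |T|^k·|P|` and `|B| = |T|^k`. -/
theorem stmt14 {P T : Type*} [Group P] [Group T] [Finite P] [Finite T] {k : ℕ}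
    (hk : 2 ≤ k) [MulAction P (Fin k)] [MulAction.IsPretransitive P (Fin k)]
    (hT48 : 48 < Nat.card T)
    (d : ℕ)
    (hd : d = sInf {d' | ∃ c : Fin k → Fin d',
        ∀ x : P, (∀ i : Fin k, c (x • i) = c i) → ∀ i : Fin k, x • i = i})
    (hDHM : (d : ℝ) ≤ 48 *
        (Nat.card (MulAction.toPermHom P (Fin k)).range : ℝ) ^ ((1 : ℝ) / k)) :
    Real.log d / Real.log (Nat.card T)
      < Real.log ((Nat.card T : ℝ) ^ k * (Nat.card P : ℝ)) /
          Real.log ((Nat.card T : ℝ) ^ k) :=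
  stmt14_general hk hT48 d hDHM
end

section
/- For m ≥ 7, the number of conjugacy classes of S_m contained in A_m (equivalently, the number of cycle types of even permutations of {1,…,m}) is strictly greater than m. That is, ω_{A_m}(S_m) > m for all m ≥ 7. -/
/-!
For `3 ≤ k ≤ m` there is an even permutation of `Fin m` moving exactly `k` points: a `k`-cycle
if `k` is odd, a transposition times a `(k-2)`-cycle if `k` is even. With the identity and the
types `(3,3)` and `(2,2,3)` (which fit as soon as `m ≥ 7`, and differ from the types `(2,4)` and
`(7)` of the same support size) this gives `m + 1` distinct cycle types of even permutations,
and cycle types are exactly the conjugacy classes of `S_m`.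
-/

open Equiv Equiv.Perm Function

namespace Equiv.Perm

variable {α : Type*} [Fintype α] [DecidableEq α]

theorem mem_alternatingGroup_iff_even_cycleType {σ : Perm α} :
    σ ∈ alternatingGroup α ↔ Even (σ.cycleType.sum + σ.cycleType.card) := by
  rw [mem_alternatingGroup, sign_of_cycleType, neg_one_pow_eq_one_iff_even (by decide)]

theorem card_le_card_conjClasses_subset_alternatingGroup {ι : Type*} [Finite ι]
    (t : ι → Multiset ℕ) (ht : Injective t) (hsum : ∀ i, (t i).sum ≤ Fintype.card α)
    (htwo : ∀ i, ∀ a ∈ t i, 2 ≤ a) (heven : ∀ i, Even ((t i).sum + (t i).card)) :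
    Nat.card ι ≤
      Nat.card {C : ConjClasses (Perm α) // ∀ g ∈ C.carrier, g ∈ alternatingGroup α} := by
  choose σ hσ using fun i => (exists_with_cycleType_iff α).mpr ⟨hsum i, htwo i⟩
  have hclass (i : ι) : ∀ g ∈ (ConjClasses.mk (σ i)).carrier, g ∈ alternatingGroup α := by
    intro g hg
    rw [ConjClasses.mem_carrier_iff_mk_eq, ConjClasses.mk_eq_mk_iff_isConj] at hg
    rw [mem_alternatingGroup_iff_even_cycleType, isConj_iff_cycleType_eq.mp hg, hσ]
    exact heven i
  refine Nat.card_le_card_of_injective (fun i => ⟨ConjClasses.mk (σ i), hclass i⟩) ?_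
  intro i j hij
  have hconj := congrArg Subtype.val hij
  rw [ConjClasses.mk_eq_mk_iff_isConj, isConj_iff_cycleType_eq, hσ, hσ] at hconj
  exact ht hconj

end Equiv.Perm

def evenCycleType : ℕ → Multiset ℕ
  | 0 => 0
  | 1 => {3, 3}
  | 2 => {2, 2, 3}
  | k + 3 => if Even k then {k + 3} else {2, k + 1}

theorem evenCycleType_sum_le (k : ℕ) : (evenCycleType k).sum ≤ max k 7 := by
  match k with
  | 0 | 1 | 2 => simp [evenCycleType]
  | k + 3 => simp only [evenCycleType]; split_ifs <;> simp; omega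

theorem two_le_of_mem_evenCycleType {k a : ℕ} (ha : a ∈ evenCycleType k) : 2 ≤ a := by
  match k with
  | 0 | 1 | 2 => simp [evenCycleType] at ha <;> omega
  | k + 3 =>
    simp only [evenCycleType] at ha
    split_ifs at ha with hk <;> simp [Nat.even_iff] at ha hk <;> omega

theorem even_evenCycleType (k : ℕ) :
    Even ((evenCycleType k).sum + (evenCycleType k).card) := by
  match k with
  | 0 | 1 | 2 => simp [evenCycleType] <;> decide
  | k + 3 =>
    simp only [evenCycleType]
    split_ifs with hk <;> simp [Nat.even_add, parity_simps, hk]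

theorem evenCycleType_injective : Injective evenCycleType := by
  -- `k` is read off the support size, except for the types `(3,3)` and `(2,2,3)`.
  let decode (t : Multiset ℕ) : ℕ :=
    if t.card = 3 then 2 else if t.card = 2 ∧ 2 ∉ t then 1 else t.sum
  refine LeftInverse.injective (g := decode) fun k => ?_
  match k with
  | 0 | 1 | 2 => simp [decode, evenCycleType]
  | k + 3 => simp only [decode, evenCycleType]; split_ifs <;> simp_all; omega

/-- For `m ≥ 7`, the number of conjugacy classes of `S_m` contained in `A_m`
(the number of cycle types of even permutations of `{1,…,m}`) is strictly
greater than `m`. -/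
theorem stmt17 (m : ℕ) (hm : 7 ≤ m) :
    m < Nat.card {C : ConjClasses (Equiv.Perm (Fin m)) //
        ∀ g ∈ C.carrier, g ∈ alternatingGroup (Fin m)} := by
  have hcard := card_le_card_conjClasses_subset_alternatingGroup (α := Fin m)
    (fun k : Fin (m + 1) => evenCycleType k) (evenCycleType_injective.comp Fin.val_injective)
    (fun k => (evenCycleType_sum_le k).trans (by simp; omega))
    (fun _ _ => two_le_of_mem_evenCycleType) (fun k => even_evenCycleType k)
  simpa using hcard
end

section
/- Let H be a finite transitive permutation group on a finite set Δ containing a regular subgroup A with |A| ≥ 48, let r ≥ 2, let K ≤ S_r be transitive, and let G satisfy A^r ≤ G ≤ H ≀ K (product action on Ω = Δ^r) with the projection of G to S_r having image K. If b_Δ(H) = 2 then b_Ω(G) ≤ ⌈ log d(K) / log |A| ⌉ + 2 and b_Ω(G) ≥ ⌈ log |G| / log |Ω| ⌉, and moreover log d(K)/log|A| ≤ log|G|/log|Ω| (using d(K) ≤ 48·|K|^{1/r} and |A|^r·|K| ≤ |G|). Consequently b_Ω(G) equals ⌈log|G|/log|Ω|⌉ + ε for some ε ∈ {0,1,2}.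 -/
/-!
A base of `H` repeated in every coordinate, together with `⌈log_{|A|} d(K)⌉` tuples whose
coordinates spell out a distinguishing colouring of `K`, is a base of `G`. Conversely a base `S`
embeds `G` into `Ω^S`, so `|G| ≤ |Ω|^b`. The DHM bound gives
`d(K)^r ≤ 48^r |K| ≤ |A|^r |K| ≤ |G|`, which compares the two logarithmic quotients because
`|Ω| = |A|^r`.
-/

open Equiv Finset

namespace Subgroup

variable {α : Type*}

def IsBase (G : Subgroup (Perm α)) (S : Finset α) : Prop :=
  ∀ g ∈ G, (∀ x ∈ S, g x = x) → g = 1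

noncomputable def baseSize (G : Subgroup (Perm α)) : ℕ :=
  sInf {n | ∃ S : Finset α, S.card = n ∧ G.IsBase S}

theorem isBase_univ [Fintype α] (G : Subgroup (Perm α)) : G.IsBase univ :=
  fun _ _ hg => Perm.ext fun x => hg x (mem_univ x)

theorem baseSize_le {G : Subgroup (Perm α)} {S : Finset α} (hS : G.IsBase S) :
    G.baseSize ≤ S.card :=
  Nat.sInf_le ⟨S, rfl, hS⟩

theorem exists_isBase_card_eq_baseSize [Fintype α] (G : Subgroup (Perm α)) :
    ∃ S : Finset α, S.card = G.baseSize ∧ G.IsBase S :=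
  Nat.sInf_mem (s := {n | ∃ S : Finset α, S.card = n ∧ G.IsBase S})
    ⟨_, univ, rfl, G.isBase_univ⟩

theorem IsBase.card_le_pow [Fintype α] {G : Subgroup (Perm α)} {S : Finset α}
    (hS : G.IsBase S) : Nat.card G ≤ Fintype.card α ^ S.card := by
  have hinj : Function.Injective fun (g : G) (x : S) => (g : Perm α) x := by
    intro g₁ g₂ h
    have hfix : ∀ x ∈ S, ((g₂ : Perm α)⁻¹ * g₁) x = x := fun x hx => by
      simp [Perm.mul_apply, congrFun h ⟨x, hx⟩]
    exact Subtype.ext (inv_mul_eq_one.mp (hS _ (G.mul_mem (G.inv_mem g₂.2) g₁.2) hfix)).symm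
  calc Nat.card G ≤ Nat.card (S → α) := Nat.card_le_card_of_injective _ hinj
    _ = Fintype.card α ^ S.card := by simp [Nat.card_fun]

theorem clog_card_le_baseSize [Fintype α] (G : Subgroup (Perm α)) :
    Nat.clog (Fintype.card α) (Nat.card G) ≤ G.baseSize := by
  obtain ⟨S, hcard, hS⟩ := G.exists_isBase_card_eq_baseSize
  exact Nat.clog_le_of_le_pow (hcard ▸ hS.card_le_pow)

def IsDistinguishing {I C : Type*} (K : Subgroup (Perm I)) (c : I → C) : Prop :=
  ∀ π ∈ K, (∀ i, c (π i) = c i) → π = 1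

noncomputable def distinguishingNumber {I : Type*} (K : Subgroup (Perm I)) : ℕ :=
  sInf {d | ∃ c : I → Fin d, K.IsDistinguishing c}

theorem exists_isDistinguishing_fin_distinguishingNumber {I : Type*} [Fintype I]
    (K : Subgroup (Perm I)) : ∃ c : I → Fin K.distinguishingNumber, K.IsDistinguishing c :=
  Nat.sInf_mem (s := {d | ∃ c : I → Fin d, K.IsDistinguishing c})
    ⟨_, Fintype.equivFin I, fun _ _ h => Perm.ext fun i => (Fintype.equivFin I).injective (h i)⟩

theorem card_eq_of_regular {Δ : Type*} (A : Subgroup (Perm Δ))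
    (htrans : ∀ x y : Δ, ∃ a ∈ A, a x = y) (hfree : ∀ a ∈ A, (∃ x, a x = x) → a = 1)
    (x₀ : Δ) : Nat.card A = Nat.card Δ := by
  refine Nat.card_eq_of_bijective (fun a : A => (a : Perm Δ) x₀)
    ⟨fun a b hab => ?_, fun y => ?_⟩
  · have hab : (a : Perm Δ) x₀ = (b : Perm Δ) x₀ := hab
    have hfix : ((b : Perm Δ)⁻¹ * a) x₀ = x₀ := by simp [Perm.mul_apply, hab]
    exact Subtype.ext (inv_mul_eq_one.mp (hfree _ (A.mul_mem (A.inv_mem b.2) a.2) ⟨x₀, hfix⟩)).symm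
  · obtain ⟨a, ha, rfl⟩ := htrans x₀ y
    exact ⟨⟨a, ha⟩, rfl⟩

end Subgroup

def MemWreathProduct {I Δ : Type*} (H : Subgroup (Perm Δ)) (K : Subgroup (Perm I))
    (g : Perm (I → Δ)) : Prop :=
  ∃ π ∈ K, ∃ h : I → Perm Δ, (∀ i, h i ∈ H) ∧ ∀ (f : I → Δ) (i : I), g f (π i) = h i (f i)

section Wreath

variable {I Δ : Type*} {H : Subgroup (Perm Δ)} {K : Subgroup (Perm I)}
  {G : Subgroup (Perm (I → Δ))}

/-- The constant tuples at a base of `H` force every `h i = 1`, after which the tuples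
`i ↦ e (c i) t` read off the colour of each coordinate, so a distinguishing colouring kills `π`. -/
theorem Subgroup.IsBase.wreath [DecidableEq (I → Δ)] {C T : Type*} [Fintype T]
    (hG : ∀ g ∈ G, MemWreathProduct H K g) {S : Finset Δ} (hS : H.IsBase S) {c : I → C}
    (hc : K.IsDistinguishing c) (e : C ↪ (T → Δ)) :
    G.IsBase (S.image (fun δ _ => δ) ∪ univ.image fun t i => e (c i) t) := by
  intro g hg hfix
  obtain ⟨π, hπ, h, hH, hgh⟩ := hG g hg
  have hconst : ∀ δ ∈ S, g (fun _ => δ) = fun _ => δ := fun δ hδ =>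
    hfix _ (mem_union_left _ (mem_image_of_mem _ hδ))
  have hcolour : ∀ t, g (fun i => e (c i) t) = fun i => e (c i) t := fun t =>
    hfix _ (mem_union_right _ (mem_image_of_mem _ (mem_univ t)))
  have hh : ∀ i, h i = 1 := fun i =>
    hS _ (hH i) fun δ hδ => by rw [← hgh (fun _ => δ), hconst δ hδ]
  have hπ1 : π = 1 := hc π hπ fun i => e.injective <| funext fun t => by
    simpa [hh] using (congrFun (hcolour t) (π i)).symm.trans (hgh _ i)
  ext f i
  simpa [hπ1, hh] using hgh f i

theorem Subgroup.baseSize_le_add_of_wreath [Fintype Δ] (hG : ∀ g ∈ G, MemWreathProduct H K g)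
    {d t : ℕ} {c : I → Fin d} (hc : K.IsDistinguishing c) (hd : d ≤ Fintype.card Δ ^ t) :
    G.baseSize ≤ H.baseSize + t := by
  classical
  obtain ⟨e⟩ : Nonempty (Fin d ↪ (Fin t → Δ)) :=
    Function.Embedding.nonempty_of_card_le (by simpa using hd)
  obtain ⟨S, hcard, hS⟩ := H.exists_isBase_card_eq_baseSize
  calc G.baseSize ≤ _ := Subgroup.baseSize_le (hS.wreath hG hc e)
    _ ≤ S.card + t :=
      (card_union_le _ _).trans (add_le_add card_image_le (card_image_le.trans (by simp)))
    _ = H.baseSize + t := by rw [hcard]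

end Wreath

theorem natCeil_log_div_log (b n : ℕ) : ⌈Real.log n / Real.log b⌉₊ = Nat.clog b n := by
  rw [Real.log_div_log, Real.natCeil_logb_natCast]

theorem pow_le_of_le_mul_rpow_one_div {d k a g r : ℕ} {c : ℝ} (hr : r ≠ 0) (hc : 0 ≤ c)
    (hd : (d : ℝ) ≤ c * (k : ℝ) ^ ((1 : ℝ) / r)) (hca : c ≤ a) (hg : a ^ r * k ≤ g) :
    d ^ r ≤ g := by
  have : (d : ℝ) ^ r ≤ g :=
    calc (d : ℝ) ^ r ≤ (c * (k : ℝ) ^ ((1 : ℝ) / r)) ^ r := pow_le_pow_left₀ d.cast_nonneg hd r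
      _ = c ^ r * k := by rw [mul_pow, one_div, Real.rpow_inv_natCast_pow k.cast_nonneg hr]
      _ ≤ (a : ℝ) ^ r * k := by gcongr
      _ ≤ g := by exact_mod_cast hg
  exact_mod_cast this

theorem log_div_log_le_log_div_log_pow {d a g r : ℕ} (ha : 1 < a) (hr : r ≠ 0)
    (h : d ^ r ≤ g) : Real.log d / Real.log a ≤ Real.log g / Real.log ((a ^ r : ℕ) : ℝ) := by
  have hla : 0 < Real.log a := Real.log_pos (by exact_mod_cast ha)
  have hlog : r * Real.log d ≤ Real.log g := by
    rcases d.eq_zero_or_pos with rfl | hd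
    · simpa using Real.log_natCast_nonneg g
    · rw [← Real.log_pow]
      exact Real.log_le_log (by positivity) (by exact_mod_cast h)
  rw [Nat.cast_pow, Real.log_pow, div_le_div_iff₀ hla (by positivity)]
  calc Real.log d * (r * Real.log a) = r * Real.log d * Real.log a := by ring
    _ ≤ Real.log g * Real.log a := mul_le_mul_of_nonneg_right hlog hla.le

theorem stmt18_general {Δ : Type*} [Fintype Δ]
    (H A : Subgroup (Equiv.Perm Δ))
    (hAtrans : ∀ δ₁ δ₂ : Δ, ∃ a ∈ A, a δ₁ = δ₂)
    (hAfree : ∀ a ∈ A, (∃ δ : Δ, a δ = δ) → a = 1)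
    (hA48 : 48 ≤ Nat.card A)
    {r : ℕ} (hr : 2 ≤ r) (K : Subgroup (Equiv.Perm (Fin r)))
    (G : Subgroup (Equiv.Perm (Fin r → Δ)))
    (hG : ∀ g ∈ G, ∃ π ∈ K, ∃ h : Fin r → Equiv.Perm Δ,
        (∀ i, h i ∈ H) ∧ ∀ (f : Fin r → Δ) (i : Fin r), g f (π i) = h i (f i))
    (hbH : sInf {n | ∃ S : Finset Δ, S.card = n ∧
        ∀ h ∈ H, (∀ δ ∈ S, h δ = δ) → h = 1} = 2)
    (d : ℕ)
    (hd : d = sInf {d' | ∃ c : Fin r → Fin d',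
        ∀ π ∈ K, (∀ i, c (π i) = c i) → π = 1})
    (hDHM : (d : ℝ) ≤ 48 * (Nat.card K : ℝ) ^ ((1 : ℝ) / r))
    (hGcard : Nat.card A ^ r * Nat.card K ≤ Nat.card G)
    (bΩ : ℕ)
    (hbΩ : bΩ = sInf {n | ∃ S : Finset (Fin r → Δ), S.card = n ∧
        ∀ g ∈ G, (∀ f ∈ S, g f = f) → g = 1}) :
    bΩ ≤ ⌈Real.log d / Real.log (Nat.card A)⌉₊ + 2 ∧
    ⌈Real.log (Nat.card G) / Real.log (Fintype.card (Fin r → Δ))⌉₊ ≤ bΩ ∧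
    Real.log d / Real.log (Nat.card A)
      ≤ Real.log (Nat.card G) / Real.log (Fintype.card (Fin r → Δ)) ∧
    ∃ ε ≤ 2, bΩ =
      ⌈Real.log (Nat.card G) / Real.log (Fintype.card (Fin r → Δ))⌉₊ + ε := by
  obtain ⟨δ₀⟩ : Nonempty Δ := by
    by_contra hΔ
    rw [not_nonempty_iff] at hΔ
    have : Nat.card A ≤ 1 := Finite.card_le_one_iff_subsingleton.mpr inferInstance
    omega
  have hA1 : 1 < Nat.card A := by omega
  have hcardΔ : Fintype.card Δ = Nat.card A := by
    rw [A.card_eq_of_regular hAtrans hAfree δ₀, Nat.card_eq_fintype_card]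
  obtain ⟨c, hc⟩ : ∃ c : Fin r → Fin d, K.IsDistinguishing c := by
    subst hd
    exact K.exists_isDistinguishing_fin_distinguishingNumber
  have hupper : bΩ ≤ 2 + Nat.clog (Nat.card A) d := by
    rw [hbΩ, ← hbH]
    exact Subgroup.baseSize_le_add_of_wreath hG hc (hcardΔ ▸ Nat.le_pow_clog hA1 d)
  have hlower : Nat.clog (Fintype.card (Fin r → Δ)) (Nat.card G) ≤ bΩ :=
    hbΩ ▸ G.clog_card_le_baseSize
  have hratio : Real.log d / Real.log (Nat.card A)
      ≤ Real.log (Nat.card G) / Real.log (Fintype.card (Fin r → Δ)) := by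
    rw [Fintype.card_fun, hcardΔ, Fintype.card_fin]
    have hpow : d ^ r ≤ Nat.card G :=
      pow_le_of_le_mul_rpow_one_div (by omega) (by norm_num) hDHM (by exact_mod_cast hA48) hGcard
    exact log_div_log_le_log_div_log_pow hA1 (by omega) hpow
  have hceil := Nat.ceil_le_ceil hratio
  simp only [natCeil_log_div_log] at hceil ⊢
  exact ⟨by omega, hlower, hratio, bΩ - Nat.clog (Fintype.card (Fin r → Δ)) (Nat.card G),
    by omega, by omega⟩

/-- Let `H` be a finite transitive permutation group on `Δ` with a regular subgroup
`A` of order at least `48`, let `K ≤ S_r` (`r ≥ 2`) be transitive, and let `G` with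
`A^r ≤ G ≤ H ≀ K` act on `Ω = Δ^r` via the product action, the projection of `G`
to `S_r` having image `K`. Assume `b_Δ(H) = 2`, the DHM bound `d(K) ≤ 48·|K|^{1/r}`
and `|A|^r·|K| ≤ |G|`. Then `b_Ω(G) ≤ ⌈log d(K)/log|A|⌉ + 2`,
`b_Ω(G) ≥ ⌈log|G|/log|Ω|⌉`, `log d(K)/log|A| ≤ log|G|/log|Ω|`, and consequently
`b_Ω(G) = ⌈log|G|/log|Ω|⌉ + ε` for some `ε ∈ {0,1,2}`. -/
theorem stmt18 {Δ : Type*} [Fintype Δ]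
    (H A : Subgroup (Equiv.Perm Δ)) (hAH : A ≤ H)
    (hHtrans : ∀ δ₁ δ₂ : Δ, ∃ h ∈ H, h δ₁ = δ₂)
    (hAtrans : ∀ δ₁ δ₂ : Δ, ∃ a ∈ A, a δ₁ = δ₂)
    (hAfree : ∀ a ∈ A, (∃ δ : Δ, a δ = δ) → a = 1)
    (hA48 : 48 ≤ Nat.card A)
    {r : ℕ} (hr : 2 ≤ r) (K : Subgroup (Equiv.Perm (Fin r)))
    (hKtrans : ∀ i j : Fin r, ∃ π ∈ K, π i = j)
    (G : Subgroup (Equiv.Perm (Fin r → Δ)))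
    (hG : ∀ g ∈ G, ∃ π ∈ K, ∃ h : Fin r → Equiv.Perm Δ,
        (∀ i, h i ∈ H) ∧ ∀ (f : Fin r → Δ) (i : Fin r), g f (π i) = h i (f i))
    (hGA : ∀ h : Fin r → Equiv.Perm Δ, (∀ i, h i ∈ A) →
        Equiv.piCongrRight h ∈ G)
    (hproj : ∀ π ∈ K, ∃ g ∈ G, ∃ h : Fin r → Equiv.Perm Δ,
        (∀ i, h i ∈ H) ∧ ∀ (f : Fin r → Δ) (i : Fin r), g f (π i) = h i (f i))
    (hbH : sInf {n | ∃ S : Finset Δ, S.card = n ∧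
        ∀ h ∈ H, (∀ δ ∈ S, h δ = δ) → h = 1} = 2)
    (d : ℕ)
    (hd : d = sInf {d' | ∃ c : Fin r → Fin d',
        ∀ π ∈ K, (∀ i, c (π i) = c i) → π = 1})
    (hDHM : (d : ℝ) ≤ 48 * (Nat.card K : ℝ) ^ ((1 : ℝ) / r))
    (hGcard : Nat.card A ^ r * Nat.card K ≤ Nat.card G)
    (bΩ : ℕ)
    (hbΩ : bΩ = sInf {n | ∃ S : Finset (Fin r → Δ), S.card = n ∧
        ∀ g ∈ G, (∀ f ∈ S, g f = f) → g = 1}) :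
    bΩ ≤ ⌈Real.log d / Real.log (Nat.card A)⌉₊ + 2 ∧
    ⌈Real.log (Nat.card G) / Real.log (Fintype.card (Fin r → Δ))⌉₊ ≤ bΩ ∧
    Real.log d / Real.log (Nat.card A)
      ≤ Real.log (Nat.card G) / Real.log (Fintype.card (Fin r → Δ)) ∧
    ∃ ε ≤ 2, bΩ =
      ⌈Real.log (Nat.card G) / Real.log (Fintype.card (Fin r → Δ))⌉₊ + ε :=
  stmt18_general H A hAtrans hAfree hA48 hr K G hG hbH d hd hDHM hGcard bΩ hbΩ
end
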